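/- First intermediate identity in the proof of Lemma 6: under the outcome model, the treatment model, IV independence, and the orthogonality conditions (Assumption 2(c), unconditional form), it holds that E[B·(B − E[B])·(A − E[A|B])·Y] = E[B·(B − E[B])·(A − E[A|B])·A]·E[ϑ_a(V)] + E[B·(B − E[B])·(A − E[A|B])·A]·E[ϑ_az(V)] + E[B·(B − E[B])]·Cov(α_u(V), ϑ_u(V)). -/

import Mathlib

/-!
Independence of `B` and `V` turns the treatment model into
`E[A | B] = E[α_z(V)] B + E[α_u(V)]`, so for binary `B` the weight `B (B - E B) (A - E[A | B])`
equals `(1 - E B) B (A - p)` with `p = E[α_z(V) + α_u(V)]`. Conditioning on `(V, A, B)` replaces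
`Y` by the outcome model, and conditioning on `(B, V)` followed by independence gives
`E[B h(V) A] = E[B] (Cov(h(V), α(V)) + E[h(V)] p)` with `α = α_z + α_u`. The orthogonality
conditions make `Cov(ϑ_a + ϑ_az, α)` vanish and reduce `Cov(ϑ_z + ϑ_u, α)` to `Cov(α_u, ϑ_u)`.
-/

open MeasureTheory ProbabilityTheory

/-- Covariance of two real random variables: `Cov(X,Z) = E[XZ] - E[X]·E[Z]`. -/
noncomputable def covE {Ω : Type*} [MeasurableSpace Ω] (μ : Measure Ω) (X Z : Ω → ℝ) : ℝ :=
  (∫ ω, X ω * Z ω ∂μ) - (∫ ω, X ω ∂μ) * (∫ ω, Z ω ∂μ)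

section Bounded

variable {Ω 𝒱 : Type*} [MeasurableSpace Ω] [MeasurableSpace 𝒱] {μ : Measure Ω}

lemma memLp_top_comp_of_abs_le {V : Ω → 𝒱} (hV : Measurable V) {h : 𝒱 → ℝ}
    (hh : Measurable h) (hb : ∃ C, ∀ x, |h x| ≤ C) : MemLp (fun ω => h (V ω)) ⊤ μ := by
  obtain ⟨C, hC⟩ := hb
  exact memLp_top_of_bound (hh.comp hV).aestronglyMeasurable C (ae_of_all _ fun ω => hC (V ω))

lemma memLp_top_of_eq_zero_or_eq_one {A : Ω → ℝ} (hA : Measurable A)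
    (h01 : ∀ ω, A ω = 0 ∨ A ω = 1) : MemLp A ⊤ μ :=
  memLp_top_of_bound hA.aestronglyMeasurable 1
    (ae_of_all _ fun ω => by rcases h01 ω with h | h <;> simp [h])

end Bounded

section Covariance

variable {Ω : Type*} [MeasurableSpace Ω] {μ : Measure Ω}

lemma covE_comm (X Z : Ω → ℝ) : covE μ X Z = covE μ Z X := by
  simp only [covE, mul_comm (X _), mul_comm (∫ ω, X ω ∂μ)]

lemma covE_eq_covariance [IsProbabilityMeasure μ] {X Z : Ω → ℝ} (hX : MemLp X 2 μ)
    (hZ : MemLp Z 2 μ) : covE μ X Z = cov[X, Z; μ] :=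
  (covariance_eq_sub hX hZ).symm

lemma covE_add_add [IsProbabilityMeasure μ] {X₁ X₂ Z₁ Z₂ : Ω → ℝ}
    (hX₁ : MemLp X₁ 2 μ) (hX₂ : MemLp X₂ 2 μ) (hZ₁ : MemLp Z₁ 2 μ) (hZ₂ : MemLp Z₂ 2 μ) :
    covE μ (fun ω => X₁ ω + X₂ ω) (fun ω => Z₁ ω + Z₂ ω)
      = covE μ X₁ Z₁ + covE μ X₁ Z₂ + covE μ X₂ Z₁ + covE μ X₂ Z₂ := by
  change covE μ (X₁ + X₂) (Z₁ + Z₂) = _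
  rw [covE_eq_covariance (hX₁.add hX₂) (hZ₁.add hZ₂), covE_eq_covariance hX₁ hZ₁,
    covE_eq_covariance hX₁ hZ₂, covE_eq_covariance hX₂ hZ₁, covE_eq_covariance hX₂ hZ₂,
    covariance_add_left hX₁ hX₂ (hZ₁.add hZ₂), covariance_add_right hX₁ hZ₁ hZ₂,
    covariance_add_right hX₂ hZ₁ hZ₂]
  ring

end Covariance

lemma integral_mul_eq_of_condExp_ae_eq {Ω : Type*} {m m₀ : MeasurableSpace Ω} {μ : Measure Ω}
    [IsFiniteMeasure μ] (hm : m ≤ m₀) {W f g : Ω → ℝ} (hW : StronglyMeasurable[m] W)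
    (hWb : MemLp W ⊤ μ) (hf : Integrable f μ) (hfg : μ[f|m] =ᵐ[μ] g) :
    ∫ ω, W ω * f ω ∂μ = ∫ ω, W ω * g ω ∂μ :=
  calc ∫ ω, W ω * f ω ∂μ = ∫ ω, (μ[W * f|m]) ω ∂μ := (integral_condExp hm).symm
    _ = ∫ ω, (W * μ[f|m]) ω ∂μ := integral_congr_ae <|
          condExp_mul_of_stronglyMeasurable_left hW
            (hWb.integrable_mul (memLp_one_iff_integrable.2 hf)) hf
    _ = ∫ ω, W ω * g ω ∂μ := integral_congr_ae <| hfg.mono fun ω h => by simp [h]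

section BinaryAlgebra

variable {Ω : Type*} [MeasurableSpace Ω] {μ : Measure Ω} {A B : Ω → ℝ}

lemma integral_instrument_weight_mul (hB01 : ∀ ω, B ω = 0 ∨ B ω = 1) {E : Ω → ℝ}
    {c d : ℝ} (hE : E =ᵐ[μ] fun ω => c * B ω + d) (b : ℝ) (g : Ω → ℝ) :
    ∫ ω, B ω * (B ω - b) * (A ω - E ω) * g ω ∂μ
      = (1 - b) * ∫ ω, B ω * (A ω - (c + d)) * g ω ∂μ := by
  rw [← integral_const_mul]
  refine integral_congr_ae (hE.mono fun ω h => ?_)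
  rcases hB01 ω with hB | hB <;> simp only [h, hB] <;> ring

lemma integral_mul_sub_self (hB01 : ∀ ω, B ω = 0 ∨ B ω = 1) (b : ℝ) :
    ∫ ω, B ω * (B ω - b) ∂μ = (1 - b) * ∫ ω, B ω ∂μ := by
  rw [← integral_const_mul]
  refine integral_congr_ae (ae_of_all _ fun ω => ?_)
  rcases hB01 ω with h | h <;> simp only [h] <;> ring

lemma integral_mul_sub_mul_self (hA01 : ∀ ω, A ω = 0 ∨ A ω = 1) (p : ℝ) :
    ∫ ω, B ω * (A ω - p) * A ω ∂μ = (1 - p) * ∫ ω, B ω * A ω ∂μ := by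
  rw [← integral_const_mul]
  refine integral_congr_ae (ae_of_all _ fun ω => ?_)
  rcases hA01 ω with h | h <;> simp only [h] <;> ring

lemma integral_mul_sub_mul_outcome_of_binary [IsFiniteMeasure μ]
    (hA01 : ∀ ω, A ω = 0 ∨ A ω = 1) (hB01 : ∀ ω, B ω = 0 ∨ B ω = 1)
    (hAb : MemLp A ⊤ μ) (hBb : MemLp B ⊤ μ) (p : ℝ) {ta tz taz tu : Ω → ℝ}
    (hta : MemLp ta ⊤ μ) (htz : MemLp tz ⊤ μ) (htaz : MemLp taz ⊤ μ) (htu : MemLp tu ⊤ μ) :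
    ∫ ω, B ω * (A ω - p) * (ta ω * A ω + tz ω * B ω + taz ω * A ω * B ω + tu ω) ∂μ
      = (1 - p) * (∫ ω, B ω * (ta ω + taz ω) * A ω ∂μ)
        + (∫ ω, B ω * (tz ω + tu ω) * A ω ∂μ) - p * ∫ ω, B ω * (tz ω + tu ω) ∂μ := by
  have hBa : MemLp (fun ω => B ω * (ta ω + taz ω)) ⊤ μ := (hta.add htaz).mul hBb
  have hBz : MemLp (fun ω => B ω * (tz ω + tu ω)) ⊤ μ := (htz.add htu).mul hBb
  have h₁ : Integrable (fun ω => B ω * (ta ω + taz ω) * A ω) μ :=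
    (hAb.mul hBa : MemLp _ ⊤ μ).integrable le_top
  have h₂ : Integrable (fun ω => B ω * (tz ω + tu ω) * A ω) μ :=
    (hAb.mul hBz : MemLp _ ⊤ μ).integrable le_top
  have h₃ : Integrable (fun ω => B ω * (tz ω + tu ω)) μ := hBz.integrable le_top
  calc _ = ∫ ω, (1 - p) * (B ω * (ta ω + taz ω) * A ω) + B ω * (tz ω + tu ω) * A ω
        - p * (B ω * (tz ω + tu ω)) ∂μ := by
        refine integral_congr_ae (ae_of_all _ fun ω => ?_)
        rcases hA01 ω with hA | hA <;> rcases hB01 ω with hB | hB <;>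
          simp only [hA, hB] <;> ring
    _ = _ := by
        rw [integral_sub ((h₁.const_mul _).fun_add h₂) (h₃.const_mul _),
          integral_add (h₁.const_mul _) h₂, integral_const_mul, integral_const_mul]

end BinaryAlgebra

section InstrumentalVariable

variable {Ω 𝒱 : Type*} [MeasurableSpace Ω] [MeasurableSpace 𝒱] {μ : Measure Ω}
  {V : Ω → 𝒱} {A B : Ω → ℝ} {αz αu : 𝒱 → ℝ}

lemma integral_mul_comp_of_indepFun (hV : Measurable V) (hB : Measurable B)
    (hindep : IndepFun B V μ) {h : 𝒱 → ℝ} (hh : Measurable h) :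
    ∫ ω, B ω * h (V ω) ∂μ = (∫ ω, B ω ∂μ) * ∫ ω, h (V ω) ∂μ :=
  (hindep.comp measurable_id hh).integral_fun_mul_eq_mul_integral hB.aestronglyMeasurable
    (hh.comp hV).aestronglyMeasurable

lemma condExp_comap_instrument_ae_eq [IsFiniteMeasure μ] (hV : Measurable V)
    (hB : Measurable B) (hBb : MemLp B ⊤ μ) (hαz : Measurable αz) (hαu : Measurable αu)
    (hαzi : Integrable (fun ω => αz (V ω)) μ) (hαui : Integrable (fun ω => αu (V ω)) μ)
    (hindep : IndepFun B V μ)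
    (htreat : μ[A | MeasurableSpace.comap (fun ω => (B ω, V ω)) inferInstance]
        =ᵐ[μ] fun ω => αz (V ω) * B ω + αu (V ω)) :
    μ[A | MeasurableSpace.comap B inferInstance]
      =ᵐ[μ] fun ω => (∫ x, αz (V x) ∂μ) * B ω + ∫ x, αu (V x) ∂μ := by
  have hBV_le : MeasurableSpace.comap (fun ω => (B ω, V ω)) inferInstance ≤ ‹_› :=
    (hB.prodMk hV).comap_le
  have hB_le : MeasurableSpace.comap B inferInstance
      ≤ MeasurableSpace.comap (fun ω => (B ω, V ω)) inferInstance :=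
    Measurable.comap_le (f := B) (comap_measurable _).fst
  have hVB : Indep (MeasurableSpace.comap V inferInstance)
      (MeasurableSpace.comap B inferInstance) μ :=
    ((IndepFun_iff_Indep B V μ).mp hindep).symm
  have hBαzi : Integrable (B * fun ω => αz (V ω)) μ :=
    hBb.integrable_mul (memLp_one_iff_integrable.2 hαzi)
  have htreat' : μ[A | MeasurableSpace.comap (fun ω => (B ω, V ω)) inferInstance]
      =ᵐ[μ] (B * fun ω => αz (V ω)) + fun ω => αu (V ω) :=
    htreat.mono fun ω h => by rw [h, Pi.add_apply, Pi.mul_apply, mul_comm (B ω)]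
  filter_upwards [(condExp_condExp_of_le (f := A) hB_le hBV_le).symm,
    condExp_congr_ae (m := MeasurableSpace.comap B inferInstance) htreat',
    condExp_add hBαzi hαui (MeasurableSpace.comap B inferInstance),
    condExp_mul_of_stronglyMeasurable_left (comap_measurable B).stronglyMeasurable hBαzi hαzi,
    condExp_indep_eq (f := fun ω => αz (V ω)) hV.comap_le (hB_le.trans hBV_le)
      (hαz.comp (comap_measurable V)).stronglyMeasurable hVB,
    condExp_indep_eq (f := fun ω => αu (V ω)) hV.comap_le (hB_le.trans hBV_le)
      (hαu.comp (comap_measurable V)).stronglyMeasurable hVB]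
    with ω h₁ h₂ h₃ h₄ h₅ h₆
  rw [h₁, h₂, h₃, Pi.add_apply, h₄, Pi.mul_apply, h₅, h₆, mul_comm]

lemma integral_mul_comp_mul_of_treatment_model [IsFiniteMeasure μ] (hV : Measurable V)
    (hB : Measurable B) (hB01 : ∀ ω, B ω = 0 ∨ B ω = 1) (hA : Integrable A μ)
    (hαz : Measurable αz) (hαu : Measurable αu)
    (hαzi : Integrable (fun ω => αz (V ω)) μ) (hαui : Integrable (fun ω => αu (V ω)) μ)
    (hindep : IndepFun B V μ)
    (htreat : μ[A | MeasurableSpace.comap (fun ω => (B ω, V ω)) inferInstance]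
        =ᵐ[μ] fun ω => αz (V ω) * B ω + αu (V ω))
    {h : 𝒱 → ℝ} (hh : Measurable h) (hhb : MemLp (fun ω => h (V ω)) ⊤ μ) :
    ∫ ω, B ω * h (V ω) * A ω ∂μ
      = (∫ ω, B ω ∂μ) * (covE μ (fun ω => h (V ω)) (fun ω => αz (V ω) + αu (V ω))
          + (∫ ω, h (V ω) ∂μ) * ((∫ ω, αz (V ω) ∂μ) + ∫ ω, αu (V ω) ∂μ)) := by
  have hW : StronglyMeasurable[MeasurableSpace.comap (fun ω => (B ω, V ω)) inferInstance]
      (fun ω => B ω * h (V ω)) :=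
    ((comap_measurable _).fst.mul (hh.comp (comap_measurable _).snd)).stronglyMeasurable
  have hB_sq : ∀ ω, B ω * h (V ω) * (αz (V ω) * B ω + αu (V ω))
      = B ω * (fun x => h x * (αz x + αu x)) (V ω) := fun ω => by
    rcases hB01 ω with hB0 | hB0 <;> simp only [hB0] <;> ring
  rw [integral_mul_eq_of_condExp_ae_eq (hB.prodMk hV).comap_le hW
      (hhb.mul (memLp_top_of_eq_zero_or_eq_one hB hB01)) hA htreat,
    integral_congr_ae (ae_of_all _ hB_sq),
    integral_mul_comp_of_indepFun (h := fun x => h x * (αz x + αu x)) hV hB hindep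
      (hh.mul (hαz.add hαu)), covE, integral_add hαzi hαui]
  ring

lemma integral_mul_sub_mul_of_outcome_model [IsFiniteMeasure μ] (hV : Measurable V)
    (hA : Measurable A) (hB : Measurable B) (hA01 : ∀ ω, A ω = 0 ∨ A ω = 1)
    (hB01 : ∀ ω, B ω = 0 ∨ B ω = 1) {Y : Ω → ℝ} (hY : Integrable Y μ) {ϑa ϑz ϑaz ϑu : 𝒱 → ℝ}
    (hϑa : MemLp (fun ω => ϑa (V ω)) ⊤ μ) (hϑz : MemLp (fun ω => ϑz (V ω)) ⊤ μ)
    (hϑaz : MemLp (fun ω => ϑaz (V ω)) ⊤ μ) (hϑu : MemLp (fun ω => ϑu (V ω)) ⊤ μ)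
    (houtcome : μ[Y | MeasurableSpace.comap (fun ω => (V ω, A ω, B ω)) inferInstance]
        =ᵐ[μ] fun ω => ϑa (V ω) * A ω + ϑz (V ω) * B ω + ϑaz (V ω) * A ω * B ω + ϑu (V ω))
    (p : ℝ) :
    ∫ ω, B ω * (A ω - p) * Y ω ∂μ
      = (1 - p) * (∫ ω, B ω * (ϑa (V ω) + ϑaz (V ω)) * A ω ∂μ)
        + (∫ ω, B ω * (ϑz (V ω) + ϑu (V ω)) * A ω ∂μ)
        - p * ∫ ω, B ω * (ϑz (V ω) + ϑu (V ω)) ∂μ := by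
  have hAb := memLp_top_of_eq_zero_or_eq_one (μ := μ) hA hA01
  have hBb := memLp_top_of_eq_zero_or_eq_one (μ := μ) hB hB01
  have hW : StronglyMeasurable[MeasurableSpace.comap (fun ω => (V ω, A ω, B ω)) inferInstance]
      (fun ω => B ω * (A ω - p)) :=
    ((comap_measurable _).snd.snd.mul
      ((comap_measurable _).snd.fst.sub_const p)).stronglyMeasurable
  rw [integral_mul_eq_of_condExp_ae_eq (hV.prodMk (hA.prodMk hB)).comap_le hW
      ((hAb.sub (memLp_const p)).mul hBb) hY houtcome]
  exact integral_mul_sub_mul_outcome_of_binary hA01 hB01 hAb hBb p hϑa hϑz hϑaz hϑu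

end InstrumentalVariable

/-- First intermediate identity in the proof of Lemma 6:
`E[B·(B − E[B])·(A − E[A|B])·Y]
  = E[B·(B − E[B])·(A − E[A|B])·A]·E[ϑ_a(V)] + E[B·(B − E[B])·(A − E[A|B])·A]·E[ϑ_az(V)]
    + E[B·(B − E[B])]·Cov(α_u(V), ϑ_u(V))`. -/
theorem lemma6_first_intermediate_identity
    {Ω 𝒱 : Type*} [MeasurableSpace Ω] [MeasurableSpace 𝒱]
    (μ : Measure Ω) [IsProbabilityMeasure μ]
    (V : Ω → 𝒱) (A B : Ω → ℝ)
    (hV : Measurable V) (hA : Measurable A) (hB : Measurable B)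
    (hA01 : ∀ ω, A ω = 0 ∨ A ω = 1) (hB01 : ∀ ω, B ω = 0 ∨ B ω = 1)
    (αz αu : 𝒱 → ℝ) (hαzm : Measurable αz) (hαum : Measurable αu)
    (hαzb : ∃ C, ∀ x, |αz x| ≤ C) (hαub : ∃ C, ∀ x, |αu x| ≤ C)
    (htreat : μ[A | MeasurableSpace.comap (fun ω => (B ω, V ω)) inferInstance]
        =ᵐ[μ] fun ω => αz (V ω) * B ω + αu (V ω))
    (hindep : IndepFun B V μ)
    (Y : Ω → ℝ) (hY : Integrable Y μ)
    (ϑa ϑz ϑaz ϑu : 𝒱 → ℝ)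
    (hϑam : Measurable ϑa) (hϑzm : Measurable ϑz)
    (hϑazm : Measurable ϑaz) (hϑum : Measurable ϑu)
    (hϑab : ∃ C, ∀ x, |ϑa x| ≤ C) (hϑzb : ∃ C, ∀ x, |ϑz x| ≤ C)
    (hϑazb : ∃ C, ∀ x, |ϑaz x| ≤ C) (hϑub : ∃ C, ∀ x, |ϑu x| ≤ C)
    (houtcome : μ[Y | MeasurableSpace.comap (fun ω => (V ω, A ω, B ω)) inferInstance]
        =ᵐ[μ] fun ω => ϑa (V ω) * A ω + ϑz (V ω) * B ω + ϑaz (V ω) * A ω * B ω + ϑu (V ω))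
    (horth1 : covE μ (fun x => ϑa (V x)) (fun x => αz (V x)) = 0)
    (horth2 : covE μ (fun x => ϑa (V x)) (fun x => αu (V x)) = 0)
    (horth3 : covE μ (fun x => ϑz (V x)) (fun x => αz (V x)) = 0)
    (horth4 : covE μ (fun x => ϑz (V x)) (fun x => αu (V x)) = 0)
    (horth5 : covE μ (fun x => ϑaz (V x)) (fun x => αz (V x)) = 0)
    (horth6 : covE μ (fun x => ϑaz (V x)) (fun x => αu (V x)) = 0)
    (horth7 : covE μ (fun x => αz (V x)) (fun x => ϑu (V x)) = 0)
    :
    (∫ ω, B ω * (B ω - ∫ x, B x ∂μ)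
        * (A ω - (μ[A | MeasurableSpace.comap B inferInstance]) ω) * Y ω ∂μ)
      = (∫ ω, B ω * (B ω - ∫ x, B x ∂μ)
            * (A ω - (μ[A | MeasurableSpace.comap B inferInstance]) ω) * A ω ∂μ)
          * (∫ ω, ϑa (V ω) ∂μ)
        + (∫ ω, B ω * (B ω - ∫ x, B x ∂μ)
            * (A ω - (μ[A | MeasurableSpace.comap B inferInstance]) ω) * A ω ∂μ)
          * (∫ ω, ϑaz (V ω) ∂μ)
        + (∫ ω, B ω * (B ω - ∫ x, B x ∂μ) ∂μ)
          * covE μ (fun x => αu (V x)) (fun x => ϑu (V x)) := by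
  have hAb := memLp_top_of_eq_zero_or_eq_one (μ := μ) hA hA01
  have hBb := memLp_top_of_eq_zero_or_eq_one (μ := μ) hB hB01
  have hbdd {h : 𝒱 → ℝ} (hh : Measurable h) (hb : ∃ C, ∀ x, |h x| ≤ C) :
      MemLp (fun ω => h (V ω)) ⊤ μ := memLp_top_comp_of_abs_le hV hh hb
  have hL2 {h : 𝒱 → ℝ} (hh : Measurable h) (hb : ∃ C, ∀ x, |h x| ≤ C) :
      MemLp (fun ω => h (V ω)) 2 μ := (hbdd hh hb).mono_exponent le_top
  have hαzi := (hbdd hαzm hαzb).integrable le_top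
  have hαui := (hbdd hαum hαub).integrable le_top
  have moment {h : 𝒱 → ℝ} (hh : Measurable h) (hhb : MemLp (fun ω => h (V ω)) ⊤ μ) :=
    integral_mul_comp_mul_of_treatment_model hV hB hB01 (hAb.integrable le_top) hαzm hαum
      hαzi hαui hindep htreat hh hhb
  have hcov_a :
      covE μ (fun ω => ϑa (V ω) + ϑaz (V ω)) (fun ω => αz (V ω) + αu (V ω)) = 0 := by
    rw [covE_add_add (hL2 hϑam hϑab) (hL2 hϑazm hϑazb) (hL2 hαzm hαzb) (hL2 hαum hαub)]
    linarith
  have hcov_u : covE μ (fun ω => ϑz (V ω) + ϑu (V ω)) (fun ω => αz (V ω) + αu (V ω))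
      = covE μ (fun ω => αu (V ω)) (fun ω => ϑu (V ω)) := by
    rw [covE_add_add (hL2 hϑzm hϑzb) (hL2 hϑum hϑub) (hL2 hαzm hαzb) (hL2 hαum hαub),
      covE_comm (fun ω => ϑu (V ω)) (fun ω => αz (V ω)), covE_comm (fun ω => αu (V ω))]
    linarith
  set p := (∫ ω, αz (V ω) ∂μ) + ∫ ω, αu (V ω) ∂μ
  have hE := condExp_comap_instrument_ae_eq hV hB hBb hαzm hαum hαzi hαui hindep htreat
  have hBA : ∫ ω, B ω * A ω ∂μ = (∫ ω, B ω ∂μ) * p := by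
    simpa [covE] using moment (h := fun _ => 1) measurable_const (memLp_top_const 1)
  rw [integral_instrument_weight_mul hB01 hE, integral_instrument_weight_mul hB01 hE,
    integral_mul_sub_mul_of_outcome_model hV hA hB hA01 hB01 hY (hbdd hϑam hϑab)
      (hbdd hϑzm hϑzb) (hbdd hϑazm hϑazb) (hbdd hϑum hϑub) houtcome,
    integral_mul_sub_mul_self hA01, hBA, integral_mul_sub_self hB01,
    moment (h := fun x => ϑa x + ϑaz x) (hϑam.add hϑazm)
      ((hbdd hϑam hϑab).add (hbdd hϑazm hϑazb)),
    moment (h := fun x => ϑz x + ϑu x) (hϑzm.add hϑum) ((hbdd hϑzm hϑzb).add (hbdd hϑum hϑub)),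
    integral_mul_comp_of_indepFun (h := fun x => ϑz x + ϑu x) hV hB hindep (hϑzm.add hϑum),
    hcov_a, hcov_u,
    integral_add ((hbdd hϑam hϑab).integrable le_top) ((hbdd hϑazm hϑazb).integrable le_top)]
  ring
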